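/- If M ∈ M_n(F_q) has irreducible characteristic polynomial, then the conjugation orbit of M under GL_n(F_q) has exactly ∏_{i=1}^{n-1}(q^n − q^i) elements. -/

import Mathlib

/-!
The stabilizer of `M` under conjugation is the unit group of the centralizer of `M`. As the
characteristic polynomial `p` of `M` is irreducible, it is the minimal polynomial, so
`F[M] ≅ F[X]/(p)` is a field of dimension `n`. Every nonzero vector `v` is then cyclic
(`N ↦ N v` is injective on `F[M]`, hence bijective onto `Fⁿ`), and a matrix commuting with `M`
is determined by its value on `v`; so the centralizer of `M` is `F[M]`. The stabilizer therefore
has `q ^ n - 1` elements, and orbit–stabilizer divides `|GL_n(F)|` by this factor.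
-/

open Polynomial MulAction

namespace ConjAct

variable {A : Type*} [Monoid A]

theorem mem_stabilizer_units_iff (a : A) (g : ConjAct Aˣ) :
    g ∈ stabilizer (ConjAct Aˣ) a ↔ ofConjAct g ∈ (Submonoid.centralizer {a}).units := by
  rw [mem_stabilizer_iff, units_smul_def, Units.mul_inv_eq_iff_eq_mul, Submonoid.mem_units_iff,
    Submonoid.mem_centralizer_iff, Submonoid.mem_centralizer_iff]
  simp only [Set.mem_singleton_iff, forall_eq]
  exact ⟨fun h => ⟨h.symm, (Commute.units_inv_left h).eq.symm⟩, fun h => h.1.symm⟩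

theorem natCard_stabilizer_units (a : A) :
    Nat.card (stabilizer (ConjAct Aˣ) a) = Nat.card (Submonoid.centralizer {a})ˣ :=
  (Nat.card_congr (Equiv.subtypeEquiv ofConjAct.toEquiv (mem_stabilizer_units_iff a))).trans
    (Nat.card_congr (Submonoid.centralizer {a}).unitsEquivUnitsType.toEquiv)

theorem orbit_units (a : A) : orbit (ConjAct Aˣ) a = {b | ∃ u : Aˣ, b = u * a * ↑u⁻¹} := by
  ext b
  simp only [mem_orbit_iff, units_smul_def, Set.mem_ofPred_eq]
  exact ⟨fun ⟨g, hg⟩ => ⟨_, hg.symm⟩, fun ⟨u, hu⟩ => ⟨toConjAct u, hu.symm⟩⟩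

end ConjAct

section AdjoinSingleton

variable {K A : Type*} [Field K] [Ring A] [Algebra K A]

/-- Unlike `minpoly.equivAdjoin`, this allows a noncommutative ambient ring `A`. -/
noncomputable def AdjoinRoot.minpolyEquivAdjoin (x : A) :
    AdjoinRoot (minpoly K x) ≃ₐ[K] Algebra.adjoin K {x} :=
  (Ideal.quotientEquivAlgOfEq K
    (by rw [minpoly.ker_aeval_eq_span_minpoly, Ideal.submodule_span_eq])).trans <|
    (Ideal.quotientKerEquivRange (aeval x)).trans
      (Subalgebra.equivOfEq _ _ (Algebra.adjoin_singleton_eq_range_aeval K x).symm)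

namespace Algebra

theorem finrank_adjoin_singleton {x : A} (hx : IsIntegral K x) :
    Module.finrank K (adjoin K {x}) = (minpoly K x).natDegree := by
  rw [← (AdjoinRoot.minpolyEquivAdjoin x).toLinearEquiv.finrank_eq,
    (AdjoinRoot.powerBasis (minpoly.ne_zero hx)).finrank, AdjoinRoot.powerBasis_dim]

theorem isUnit_of_mem_adjoin_singleton {x : A} (hirr : Irreducible (minpoly K x)) {y : A}
    (hy : y ∈ adjoin K {x}) (hy0 : y ≠ 0) : IsUnit y := by
  have : Fact (Irreducible (minpoly K x)) := ⟨hirr⟩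
  obtain ⟨z, hz⟩ := (AdjoinRoot.minpolyEquivAdjoin x).surjective ⟨y, hy⟩
  have hz0 : z ≠ 0 := by
    rintro rfl
    exact hy0 (by simpa using congrArg Subtype.val hz.symm)
  have := ((isUnit_iff_ne_zero.mpr hz0).map (AdjoinRoot.minpolyEquivAdjoin x)).map
    (adjoin K {x}).val
  rwa [hz] at this

theorem natCard_units_adjoin_singleton [Finite K] {x : A} (hirr : Irreducible (minpoly K x)) :
    Nat.card (adjoin K {x})ˣ = Nat.card K ^ (minpoly K x).natDegree - 1 := by
  have : Fact (Irreducible (minpoly K x)) := ⟨hirr⟩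
  let pb := AdjoinRoot.powerBasis hirr.ne_zero
  have : Module.Finite K (AdjoinRoot (minpoly K x)) := pb.finite
  rw [← Nat.card_congr (Units.mapEquiv (AdjoinRoot.minpolyEquivAdjoin x).toMulEquiv).toEquiv,
    Nat.card_units, Module.natCard_eq_pow_finrank (K := K), pb.finrank,
    AdjoinRoot.powerBasis_dim]

end Algebra

end AdjoinSingleton

namespace Matrix

variable {ι K : Type*} [Fintype ι] [DecidableEq ι] [Field K] {M : Matrix ι ι K}

theorem nonempty_of_irreducible_charpoly (h : Irreducible M.charpoly) : Nonempty ι := by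
  by_contra hι
  rw [not_nonempty_iff] at hι
  exact h.not_isUnit (by simp [charpoly_isEmpty])

theorem minpoly_eq_charpoly_of_irreducible (h : Irreducible M.charpoly) :
    minpoly K M = M.charpoly :=
  have := nonempty_of_irreducible_charpoly h
  (minpoly.eq_of_irreducible_of_monic h (aeval_self_charpoly M) M.charpoly_monic).symm

theorem exists_mem_adjoin_mulVec_eq (h : Irreducible M.charpoly) {v : ι → K} (hv : v ≠ 0)
    (w : ι → K) : ∃ N ∈ Algebra.adjoin K {M}, N *ᵥ v = w := by
  let φ : Algebra.adjoin K {M} →ₗ[K] ι → K :=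
    LinearMap.applyₗ v ∘ₗ toLin'.toLinearMap ∘ₗ (Algebra.adjoin K {M}).val.toLinearMap
  have hφ : Function.Injective φ := by
    rw [← LinearMap.ker_eq_bot, LinearMap.ker_eq_bot']
    rintro ⟨N, hN⟩ hNv
    by_contra hN0
    have hNunit := Algebra.isUnit_of_mem_adjoin_singleton
      (minpoly_eq_charpoly_of_irreducible h ▸ h) hN (fun h0 => hN0 (Subtype.ext h0))
    exact hv <| mulVec_injective_of_isUnit hNunit (hNv.trans (mulVec_zero N).symm)
  have hdim : Module.finrank K (Algebra.adjoin K {M}) = Module.finrank K (ι → K) := by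
    rw [Algebra.finrank_adjoin_singleton (Algebra.IsIntegral.isIntegral M),
      minpoly_eq_charpoly_of_irreducible h, charpoly_natDegree_eq_dim,
      Module.finrank_fintype_fun_eq_card]
  obtain ⟨⟨N, hN⟩, hNv⟩ := (LinearMap.injective_iff_surjective_of_finrank_eq_finrank hdim).mp hφ w
  exact ⟨N, hN, hNv⟩

theorem centralizer_singleton_eq_adjoin (h : Irreducible M.charpoly) :
    Subalgebra.centralizer K {M} = Algebra.adjoin K {M} := by
  have hle : Algebra.adjoin K {M} ≤ Subalgebra.centralizer K {M} :=
    Algebra.adjoin_le (by simp [Set.mem_centralizer_iff])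
  refine le_antisymm (fun N hN => ?_) hle
  have commute_of_mem_adjoin {A B : Matrix ι ι K} (hA : A ∈ Subalgebra.centralizer K {M})
      (hB : B ∈ Algebra.adjoin K {M}) : A * B = B * A :=
    (Subalgebra.mem_centralizer_iff K).mp (Algebra.adjoin_le_centralizer_centralizer K {M} hB) A hA
  obtain ⟨i⟩ := nonempty_of_irreducible_charpoly h
  have hv : (Pi.single i 1 : ι → K) ≠ 0 := by simp
  obtain ⟨A, hA, hAv⟩ := exists_mem_adjoin_mulVec_eq h hv (N *ᵥ Pi.single i 1)
  suffices N = A from this ▸ hA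
  refine mulVec_injective (funext fun w => ?_)
  obtain ⟨B, hB, rfl⟩ := exists_mem_adjoin_mulVec_eq h hv w
  calc N *ᵥ (B *ᵥ Pi.single i 1) = B *ᵥ (N *ᵥ Pi.single i 1) := by
        rw [mulVec_mulVec, mulVec_mulVec, commute_of_mem_adjoin hN hB]
    _ = A *ᵥ (B *ᵥ Pi.single i 1) := by
        rw [← hAv, mulVec_mulVec, mulVec_mulVec, commute_of_mem_adjoin (hle hA) hB]

end Matrix

open Matrix in
theorem card_conjugation_orbit_of_irreducible_charpoly
    (F : Type*) [Field F] [Fintype F] (q n : ℕ) (hq : Fintype.card F = q)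
    (M : Matrix (Fin n) (Fin n) F) (h : Irreducible M.charpoly) :
    Nat.card {N : Matrix (Fin n) (Fin n) F //
        ∃ P : GL (Fin n) F, N = (P : Matrix (Fin n) (Fin n) F) * M * (↑P⁻¹ : Matrix (Fin n) (Fin n) F)} =
      ∏ i ∈ Finset.Ico 1 n, (q ^ n - q ^ i) := by
  have hn : 0 < n := Fin.pos_iff_nonempty.mpr (nonempty_of_irreducible_charpoly h)
  have hstab : Nat.card (stabilizer (ConjAct (GL (Fin n) F)) M) = q ^ n - 1 := by
    have hirr : Irreducible (minpoly F M) := minpoly_eq_charpoly_of_irreducible h ▸ h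
    rw [ConjAct.natCard_stabilizer_units]
    change Nat.card (Subalgebra.centralizer F {M})ˣ = _
    rw [centralizer_singleton_eq_adjoin h, Algebra.natCard_units_adjoin_singleton hirr,
      Nat.card_eq_fintype_card, hq, minpoly_eq_charpoly_of_irreducible h,
      charpoly_natDegree_eq_dim, Fintype.card_fin]
  have hGL : Nat.card (GL (Fin n) F) = (q ^ n - 1) * ∏ i ∈ Finset.Ico 1 n, (q ^ n - q ^ i) := by
    rw [card_GL_field, hq, Fin.prod_univ_eq_prod_range (fun i => q ^ n - q ^ i),
      Finset.prod_range_eq_mul_Ico _ hn, pow_zero]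
  have hpos : 0 < q ^ n - 1 :=
    Nat.sub_pos_of_lt (Nat.one_lt_pow hn.ne' (hq ▸ Fintype.one_lt_card))
  have horbit : Nat.card (stabilizer (ConjAct (GL (Fin n) F)) M) *
      Nat.card (orbit (ConjAct (GL (Fin n) F)) M) = Nat.card (GL (Fin n) F) := by
    rw [Nat.card_coe_set_eq, ← index_stabilizer]
    exact Subgroup.card_mul_index _
  rw [hstab, hGL, ConjAct.orbit_units] at horbit
  exact Nat.eq_of_mul_eq_mul_left hpos horbit
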